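/- arXiv:0805.1810 — 5 statements merged into one kernel-verified Lean document; each statement's English description precedes it below -/
import Mathlib

section
/- Let I be a nonempty finite set. Suppose A is a nonempty set, for each i in I a map ρ_i : A → A with ρ_i² = id, and for each a in A an integer matrix C^a = (c^a_{ij}) with c^a_{ii} = 2 for all i. Suppose for each a in A a subset R^a ⊆ ℤ^I satisfies axioms (R1)–(R4) of a root system (with σ_i^a(α_j) = α_j − c^a_{ij}α_i). Then each C^a is a generalized Cartan matrix, i.e. c^a_{jk} ≤ 0 for j ≠ k and c^a_{jk} = 0 implies c^a_{kj} = 0, and moreover c^a_{ij} = c^{ρ_i(a)}_{ij} for all a, i, j. -/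
/-- The standard basis vector `α i` of `ℤ^I`. -/
def alphaV {I : Type*} [DecidableEq I] (i : I) : I → ℤ := fun j => if j = i then 1 else 0

/-- The reflection `σ_i^a` on `ℤ^I`, determined by `σ_i^a(α_j) = α_j - c^a_{ij} α_i`. -/
def reflMap {I A : Type*} [DecidableEq I] [Fintype I] (c : A → I → I → ℤ) (a : A) (i : I)
    (v : I → ℤ) : I → ℤ :=
  v - (∑ j, c a i j * v j) • alphaV i

/-- The set `R^a ∩ (ℕ_0 α_i + ℕ_0 α_j)`. -/
def coneIJ {I : Type*} [DecidableEq I] (R : Set (I → ℤ)) (i j : I) : Set (I → ℤ) :=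
  R ∩ {v | ∃ p q : ℕ, v = (p : ℤ) • alphaV i + (q : ℤ) • alphaV j}

/-- Axioms (R1)–(R4) of a root system of type `𝒞`. -/
structure IsRootSystem {I A : Type*} [DecidableEq I] [Fintype I]
    (ρ : I → A → A) (c : A → I → I → ℤ) (R : A → Set (I → ℤ)) : Prop where
  R1 : ∀ a, R a = {v ∈ R a | ∀ i, 0 ≤ v i} ∪ -{v ∈ R a | ∀ i, 0 ≤ v i}
  R2 : ∀ a i, R a ∩ {v | ∃ z : ℤ, v = z • alphaV i} = {alphaV i, -alphaV i}
  R3 : ∀ a i, (reflMap c a i) '' R a = R (ρ i a)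
  R4 : ∀ a i j, i ≠ j → (coneIJ (R a) i j).Finite →
      ((ρ i ∘ ρ j)^[(coneIJ (R a) i j).ncard] a) = a

/-- Axioms of a Cartan scheme: `(C1)`, `(C2)` and generalized Cartan matrices. -/
structure IsCartanScheme {I A : Type*} (ρ : I → A → A) (c : A → I → I → ℤ) : Prop where
  C1 : ∀ i a, ρ i (ρ i a) = a
  M1diag : ∀ a i, c a i i = 2
  M1off : ∀ a i j, i ≠ j → c a i j ≤ 0
  M2 : ∀ a i j, c a i j = 0 → c a j i = 0
  C2 : ∀ a i j, c a i j = c (ρ i a) i j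

lemma sum_mul_alphaV' {I : Type*} [DecidableEq I] [Fintype I] (f : I → ℤ) (j : I) :
    ∑ k, f k * alphaV j k = f j := by
  simp [alphaV, mul_ite]

lemma reflMap_apply' {I A : Type*} [DecidableEq I] [Fintype I] (c : A → I → I → ℤ) (a : A)
    (i : I) (v : I → ℤ) (k : I) :
    reflMap c a i v k = v k - (∑ m, c a i m * v m) * alphaV i k := by
  simp [reflMap]

/-- the root-system axioms force the matrices to be generalized Cartan
matrices and force condition (C2). -/
theorem stmt0 {I A : Type*} [DecidableEq I] [Fintype I] [Nonempty I] [Nonempty A]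
    (ρ : I → A → A) (c : A → I → I → ℤ) (R : A → Set (I → ℤ))
    (hC1 : ∀ i a, ρ i (ρ i a) = a)
    (hdiag : ∀ a i, c a i i = 2)
    (hRS : IsRootSystem ρ c R) :
    IsCartanScheme ρ c := by
  -- basic facts
  have halpha : ∀ (a : A) (i : I), alphaV i ∈ R a := by
    intro a i
    have h2 := hRS.R2 a i
    have : alphaV i ∈ ({alphaV i, -alphaV i} : Set (I → ℤ)) := by left; rfl
    rw [← h2] at this
    exact this.1
  have hpos : ∀ (a : A) (v : I → ℤ), v ∈ R a → ∀ k, 0 < v k → ∀ l, 0 ≤ v l := by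
    intro a v hv k hk l
    rw [hRS.R1 a] at hv
    rcases hv with h | h
    · exact h.2 l
    · have h' : -v ∈ {v ∈ R a | ∀ i, 0 ≤ v i} := h
      have := h'.2 k
      simp only [Pi.neg_apply] at this
      linarith
  have hstep : ∀ (a : A) (i : I) (v : I → ℤ), v ∈ R a → reflMap c a i v ∈ R (ρ i a) := by
    intro a i v hv
    rw [← hRS.R3 a i]
    exact Set.mem_image_of_mem _ hv
  -- value of reflMap on a basis vector
  have hrefl_alpha : ∀ (a : A) (i j k : I),
      reflMap c a i (alphaV j) k = alphaV j k - c a i j * alphaV i k := by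
    intro a i j k
    rw [reflMap_apply', sum_mul_alphaV']
  -- M1off
  have hM1off : ∀ (a : A) (i j : I), i ≠ j → c a i j ≤ 0 := by
    intro a i j hij
    have hw : reflMap c a i (alphaV j) ∈ R (ρ i a) := hstep a i _ (halpha a j)
    have hji : ¬ j = i := fun h => hij h.symm
    have hwj : reflMap c a i (alphaV j) j = 1 := by
      rw [hrefl_alpha]
      simp [alphaV, hij, hji]
    have hwi : reflMap c a i (alphaV j) i = -(c a i j) := by
      rw [hrefl_alpha]
      simp [alphaV, hij, hji]
    have := hpos (ρ i a) _ hw j (by rw [hwj]; norm_num) i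
    rw [hwi] at this
    linarith
  -- C2, one inequality
  have hC2le : ∀ (a : A) (i j : I), i ≠ j → c (ρ i a) i j ≤ c a i j := by
    intro a i j hij
    set w1 := reflMap c a i (alphaV j) with hw1def
    have hw1 : w1 ∈ R (ρ i a) := hstep a i _ (halpha a j)
    set w2 := reflMap c (ρ i a) i w1 with hw2def
    have hw2 : w2 ∈ R a := by
      have := hstep (ρ i a) i w1 hw1
      rwa [hC1 i a] at this
    -- compute the linear functional on w1
    have hsum : ∑ m, c (ρ i a) i m * w1 m = c (ρ i a) i j - 2 * c a i j := by
      have : ∀ m, c (ρ i a) i m * w1 m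
          = c (ρ i a) i m * alphaV j m - (c a i j) * (c (ρ i a) i m * alphaV i m) := by
        intro m
        rw [hw1def, hrefl_alpha]
        ring
      rw [Finset.sum_congr rfl (fun m _ => this m), Finset.sum_sub_distrib,
        sum_mul_alphaV', ← Finset.mul_sum, sum_mul_alphaV', hdiag]
      ring
    have hw2k : ∀ k, w2 k = alphaV j k + (c a i j - c (ρ i a) i j) * alphaV i k := by
      intro k
      rw [hw2def, reflMap_apply', hsum, hw1def, hrefl_alpha]
      ring
    have hji : ¬ j = i := fun h => hij h.symm
    have hw2j : w2 j = 1 := by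
      rw [hw2k]
      simp [alphaV, hji]
    have hw2i : w2 i = c a i j - c (ρ i a) i j := by
      rw [hw2k]
      simp [alphaV, hij]
    have := hpos a _ hw2 j (by rw [hw2j]; norm_num) i
    rw [hw2i] at this
    linarith
  -- C2
  have hC2 : ∀ (a : A) (i j : I), c a i j = c (ρ i a) i j := by
    intro a i j
    by_cases hij : i = j
    · subst hij; rw [hdiag, hdiag]
    · have h1 := hC2le a i j hij
      have h2 := hC2le (ρ i a) i j hij
      rw [hC1 i a] at h2
      omega
  -- M2
  have hM2 : ∀ (a : A) (i j : I), c a i j = 0 → c a j i = 0 := by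
    intro a i j hcz
    by_cases hij : i = j
    · subst hij; exact hcz
    · -- u1 = reflMap at (ρ j a, j) of α_i, lands in R a
      set u1 := reflMap c (ρ j a) j (alphaV i) with hu1def
      have hu1 : u1 ∈ R a := by
        have := hstep (ρ j a) j _ (halpha (ρ j a) i)
        rwa [hC1 j a] at this
      have hji : ¬ j = i := fun h => hij h.symm
      have hcji : c (ρ j a) j i = c a j i := by
        have h := hC2 (ρ j a) j i
        rw [hC1 j a] at h
        exact h
      have hu1k : ∀ k, u1 k = alphaV i k - c a j i * alphaV j k := by
        intro k
        rw [hu1def, hrefl_alpha, hcji]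
      -- u2 = reflMap at (a, i) of u1, lands in R (ρ i a)
      set u2 := reflMap c a i u1 with hu2def
      have hu2 : u2 ∈ R (ρ i a) := hstep a i _ hu1
      have hsum : ∑ m, c a i m * u1 m = 2 := by
        have : ∀ m, c a i m * u1 m
            = c a i m * alphaV i m - (c a j i) * (c a i m * alphaV j m) := by
          intro m
          rw [hu1k]
          ring
        rw [Finset.sum_congr rfl (fun m _ => this m), Finset.sum_sub_distrib,
          sum_mul_alphaV', ← Finset.mul_sum, sum_mul_alphaV', hdiag, hcz]
        ring
      have hu2k : ∀ k, u2 k = -(alphaV i k) - c a j i * alphaV j k := by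
        intro k
        rw [hu2def, reflMap_apply', hsum, hu1k]
        ring
      have hu2i : u2 i = -1 := by
        rw [hu2k]
        simp [alphaV, hij]
      have hu2j : u2 j = -(c a j i) := by
        rw [hu2k]
        simp [alphaV, hji]
      by_contra hne
      have hle : c a j i ≤ 0 := hM1off a j i hji
      have hlt : 0 < u2 j := by rw [hu2j]; omega
      have := hpos (ρ i a) _ hu2 j hlt i
      rw [hu2i] at this
      linarith
  exact ⟨hC1, hdiag, hM1off, hM2, hC2⟩
end

section
/- Let C be a Cartan scheme and R a root system of type C. For a ∈ A and i ≠ j in I, the following are equivalent: (1) c^a_{ij} = c^a_{ji} = 0; (2) R^a ∩ (ℕ_0α_i + ℕ_0α_j) = {α_i, α_j}; (3) m_{i,j}^a = 2, where m_{i,j}^a = |R^a ∩ (ℕ_0α_i + ℕ_0α_j)|. -/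
section aux
variable {I A : Type*} [DecidableEq I] [Fintype I]

lemma alphaV_ne {i j : I} (h : i ≠ j) : alphaV i ≠ alphaV j := by
  intro he; have := congrFun he i; simp [alphaV, h] at this

lemma comb_apply {i j : I} (hij : i ≠ j) (p q : ℤ) (k : I) :
    (p • alphaV i + q • alphaV j) k = if k = i then p else if k = j then q else 0 := by
  simp only [Pi.add_apply, Pi.smul_apply, alphaV, smul_eq_mul, mul_ite, mul_one, mul_zero]
  split_ifs with h1 h2 <;> simp_all

lemma sum_comb (crow : I → ℤ) {i j : I} (hij : i ≠ j) (p q : ℤ) :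
    ∑ k, crow k * (p • alphaV i + q • alphaV j) k = crow i * p + crow j * q := by
  simp only [Pi.add_apply, Pi.smul_apply, alphaV, smul_eq_mul, mul_ite, mul_one, mul_zero,
    mul_add, Finset.sum_add_distrib, Finset.sum_ite_eq', Finset.mem_univ, if_true]

variable {ρ : I → A → A} {c : A → I → I → ℤ} {R : A → Set (I → ℤ)}

lemma alphaV_mem (hRS : IsRootSystem ρ c R) (a : A) (i : I) : alphaV i ∈ R a := by
  have h : alphaV i ∈ ({alphaV i, -alphaV i} : Set (I → ℤ)) := by left; rfl
  rw [← hRS.R2 a i] at h; exact h.1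

/-- The only root of the form `q • α_j` with `q ≥ 0` in `R a` is `α_j`. -/
lemma root_smul_eq (hRS : IsRootSystem ρ c R) {a : A} {jj : I} {v : I → ℤ}
    (hv : v ∈ R a) (q : ℤ) (hq : 0 ≤ q) (hvq : v = q • alphaV jj) : v = alphaV jj := by
  have h2 : v ∈ ({alphaV jj, -alphaV jj} : Set (I → ℤ)) := by
    rw [← hRS.R2 a jj]; exact ⟨hv, q, hvq⟩
  rcases h2 with h | h
  · exact h
  · exfalso
    have hvj : v jj = q := by rw [hvq]; simp [alphaV]
    have : v jj = -1 := by rw [h]; simp [alphaV]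
    omega
end aux


/-- characterizations of `m_{i,j}^a = 2`. -/
theorem stmt4 {I A : Type*} [DecidableEq I] [Fintype I] [Nonempty I] [Nonempty A]
    (ρ : I → A → A) (c : A → I → I → ℤ) (R : A → Set (I → ℤ))
    (hCS : IsCartanScheme ρ c) (hRS : IsRootSystem ρ c R)
    (a : A) (i j : I) (hij : i ≠ j) :
    List.TFAE [c a i j = 0 ∧ c a j i = 0,
      coneIJ (R a) i j = {alphaV i, alphaV j},
      (coneIJ (R a) i j).ncard = 2] := by
  have hane : alphaV i ≠ alphaV j := alphaV_ne hij
  have hmi : alphaV i ∈ coneIJ (R a) i j :=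
    ⟨alphaV_mem hRS a i, 1, 0, by push_cast; simp⟩
  have hmj : alphaV j ∈ coneIJ (R a) i j :=
    ⟨alphaV_mem hRS a j, 0, 1, by push_cast; simp⟩
  tfae_have 1 → 2 := by
    rintro ⟨hc, -⟩
    apply Set.eq_of_subset_of_subset
    · rintro v ⟨hvR, p, q, hv⟩
      -- w = reflMap c a i v ∈ R (ρ i a)
      have hwR : reflMap c a i v ∈ R (ρ i a) := by
        rw [← hRS.R3 a i]; exact ⟨v, hvR, rfl⟩
      have hsum : ∑ k, c a i k * v k = 2 * p := by
        rw [hv, sum_comb _ hij, hCS.M1diag, hc]; ring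
      have hwi : reflMap c a i v i = -p := by
        simp only [reflMap, Pi.sub_apply, Pi.smul_apply, alphaV, smul_eq_mul, hsum]
        rw [hv, comb_apply hij]; simp; ring
      have hwj : reflMap c a i v j = q := by
        simp only [reflMap, Pi.sub_apply, Pi.smul_apply, alphaV, smul_eq_mul, hsum]
        rw [hv, comb_apply hij]; simp [hij, Ne.symm hij]
      rw [hRS.R1 (ρ i a)] at hwR
      rcases hwR with ⟨-, hpos⟩ | hneg
      · have hp0 : (p : ℤ) = 0 := by have := hpos i; omega
        have hvq : v = (q : ℤ) • alphaV j := by rw [hv, hp0]; simp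
        exact Or.inr (root_smul_eq hRS hvR q (Int.natCast_nonneg q) hvq)
      · rw [Set.mem_neg] at hneg
        obtain ⟨-, hpos⟩ := hneg
        have hq0 : (q : ℤ) = 0 := by
          have := hpos j; simp only [Pi.neg_apply, hwj] at this; omega
        have hvp : v = (p : ℤ) • alphaV i := by rw [hv, hq0]; simp
        exact Or.inl (root_smul_eq hRS hvR p (Int.natCast_nonneg p) hvp)
    · rintro v (rfl | rfl)
      exacts [hmi, hmj]
  tfae_have 2 → 3 := by
    intro h2; rw [h2, Set.ncard_pair hane]
  tfae_have 3 → 2 := by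
    intro h3
    have hfin : (coneIJ (R a) i j).Finite := by
      by_contra hf
      rw [Set.Infinite.ncard (by simpa using hf)] at h3; omega
    have hsub : ({alphaV i, alphaV j} : Set (I → ℤ)) ⊆ coneIJ (R a) i j := by
      rintro v (rfl | rfl); exacts [hmi, hmj]
    exact (Set.eq_of_subset_of_ncard_le hsub (by rw [h3, Set.ncard_pair hane]) hfin).symm
  tfae_have 2 → 1 := by
    intro h2
    -- u = α_j - c a i j • α_i ∈ R a via reflMap at ρ i a
    have hcle : c a i j ≤ 0 := hCS.M1off a i j hij
    set u : I → ℤ := ((-(c a i j)).toNat : ℤ) • alphaV i + (1 : ℤ) • alphaV j with hu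
    have huR : u ∈ R a := by
      have h3 := hRS.R3 (ρ i a) i
      rw [hCS.C1 i a] at h3
      rw [← h3]
      refine ⟨alphaV j, alphaV_mem hRS (ρ i a) j, ?_⟩
      have hsum : ∑ k, c (ρ i a) i k * alphaV j k = c a i j := by
        have : (alphaV j : I → ℤ) = (0 : ℤ) • alphaV i + (1 : ℤ) • alphaV j := by simp
        rw [this, sum_comb _ hij, show c (ρ i a) i j = c a i j from (hCS.C2 a i j).symm]; ring
      funext k
      simp only [reflMap, Pi.sub_apply, Pi.smul_apply, smul_eq_mul, hsum, hu]
      rw [comb_apply hij]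
      simp only [alphaV]
      split_ifs with h1 h2 <;> simp_all <;> omega
    have humem : u ∈ coneIJ (R a) i j := ⟨huR, (-(c a i j)).toNat, 1, by push_cast; rfl⟩
    rw [h2] at humem
    have hcij : c a i j = 0 := by
      rcases humem with h | h
      · exfalso
        have hh := congrFun h j
        rw [hu, comb_apply hij] at hh
        simp [alphaV, Ne.symm hij, hij] at hh
      · have h' : u = alphaV j := h
        have hh := congrFun h' i
        rw [hu, comb_apply hij] at hh
        simp [alphaV, hij] at hh
        omega
    exact ⟨hcij, hCS.M2 a i j hcij⟩
  tfae_finish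
end

section
/- Let C be a Cartan scheme and R a root system of type C. For a ∈ A and i ≠ j in I, the following are equivalent: (1) c^a_{ij} = c^a_{ji} = −1; (2) R^a ∩ (ℕ_0α_i + ℕ_0α_j) = {α_i, α_i + α_j, α_j}; (3) m_{i,j}^a = 3. -/
set_option linter.unusedSectionVars false


section helpers
variable {I A : Type*} [DecidableEq I] [Fintype I]

lemma pq_apply (i j : I) (p q : ℤ) (k : I) :
    ((p • alphaV i + q • alphaV j) : I → ℤ) k
      = p * (if k = i then 1 else 0) + q * (if k = j then 1 else 0) := by
  simp [alphaV]

lemma pq_apply_i {i j : I} (hij : i ≠ j) (p q : ℤ) :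
    ((p • alphaV i + q • alphaV j) : I → ℤ) i = p := by
  simp [pq_apply, alphaV, hij]

lemma pq_apply_j {i j : I} (hij : i ≠ j) (p q : ℤ) :
    ((p • alphaV i + q • alphaV j) : I → ℤ) j = q := by
  simp [pq_apply, alphaV, Ne.symm hij]

lemma sum_row (c : A → I → I → ℤ) (a : A) (i j : I) (hij : i ≠ j) (p q : ℤ) :
    ∑ k, c a i k * ((p • alphaV i + q • alphaV j) : I → ℤ) k
      = c a i i * p + c a i j * q := by
  have : ∀ k, c a i k * ((p • alphaV i + q • alphaV j) : I → ℤ) k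
      = (if k = i then c a i i * p else 0) + (if k = j then c a i j * q else 0) := by
    intro k
    rw [pq_apply]
    split_ifs with h1 h2 h2 <;> subst_vars <;> first | (exact absurd rfl hij) | ring
  rw [Finset.sum_congr rfl (fun k _ => this k)]
  simp [Finset.sum_add_distrib]

lemma reflMap_pq (c : A → I → I → ℤ) (a : A) {i j : I} (hij : i ≠ j) (hii : c a i i = 2)
    (p q : ℤ) :
    reflMap c a i (p • alphaV i + q • alphaV j)
      = (-p - c a i j * q) • alphaV i + q • alphaV j := by
  unfold reflMap
  rw [sum_row c a i j hij, hii]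
  funext k
  simp only [Pi.sub_apply, pq_apply, Pi.smul_apply, alphaV, smul_eq_mul]
  split_ifs <;> ring

variable {ρ : I → A → A} {c : A → I → I → ℤ} {R : A → Set (I → ℤ)}
variable (hCS : IsCartanScheme ρ c) (hRS : IsRootSystem ρ c R)
include hCS hRS

lemma alpha_mem (a : A) (i : I) : alphaV i ∈ R a := by
  have h : alphaV i ∈ ({alphaV i, -alphaV i} : Set (I → ℤ)) := by left; rfl
  rw [← hRS.R2 a i] at h
  exact h.1

lemma scalar_root {a : A} {i : I} {v : I → ℤ} (hv : v ∈ R a) (z : ℤ)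
    (hz : v = z • alphaV i) : v = alphaV i ∨ v = -alphaV i := by
  have h : v ∈ R a ∩ {v | ∃ z : ℤ, v = z • alphaV i} := ⟨hv, z, hz⟩
  rw [hRS.R2 a i] at h
  exact h

lemma sign_root {a : A} {v : I → ℤ} (hv : v ∈ R a) :
    (∀ k, 0 ≤ v k) ∨ (∀ k, v k ≤ 0) := by
  rw [hRS.R1 a] at hv
  rcases hv with h | h
  · exact Or.inl h.2
  · rw [Set.mem_neg] at h
    exact Or.inr fun k => by have := h.2 k; simpa using this

lemma refl_mem_forward {a : A} {i : I} {v : I → ℤ} (hv : v ∈ R a) :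
    reflMap c a i v ∈ R (ρ i a) := by
  rw [← hRS.R3 a i]
  exact ⟨v, hv, rfl⟩

lemma refl_mem_back {a : A} {i : I} {v : I → ℤ} (hv : v ∈ R (ρ i a)) :
    reflMap c a i v ∈ R a := by
  have h := refl_mem_forward hCS hRS hv (i := i)
  rw [hCS.C1] at h
  have heq : reflMap c (ρ i a) i v = reflMap c a i v := by
    unfold reflMap
    have : ∀ k, c (ρ i a) i k = c a i k := fun k => (hCS.C2 a i k).symm
    simp [this]
  rwa [heq] at h

/-- Classification of the ℕ-combinations that can be roots. -/
lemma nat_pq_root_cases {a : A} {i j : I} (hij : i ≠ j) {p q : ℕ}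
    (hv : ((p : ℤ) • alphaV i + (q : ℤ) • alphaV j) ∈ R a) :
    (p = 1 ∧ q = 0) ∨ (p = 0 ∧ q = 1) ∨ (1 ≤ p ∧ 1 ≤ q) := by
  rcases Nat.eq_zero_or_pos q with hq | hq
  · subst hq
    have hz : ((p : ℤ) • alphaV i + ((0:ℕ) : ℤ) • alphaV j) = (p : ℤ) • alphaV i := by simp
    rcases scalar_root hCS hRS hv p hz with h | h
    · left
      have := congrFun h i
      rw [pq_apply_i hij] at this
      simp [alphaV] at this
      omega
    · exfalso
      have := congrFun h i
      rw [pq_apply_i hij] at this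
      simp [alphaV] at this
  rcases Nat.eq_zero_or_pos p with hp | hp
  · subst hp
    have hz : (((0:ℕ) : ℤ) • alphaV i + (q : ℤ) • alphaV j) = (q : ℤ) • alphaV j := by simp
    rcases scalar_root hCS hRS hv q hz with h | h
    · right; left
      have := congrFun h j
      rw [pq_apply_j hij] at this
      simp [alphaV] at this
      omega
    · exfalso
      have := congrFun h j
      rw [pq_apply_j hij] at this
      simp [alphaV] at this
  · right; right; exact ⟨hp, hq⟩

/-- Reflecting a root with positive `j`-part. -/
lemma pos_root_refl {a : A} {i j : I} (hij : i ≠ j) {p q : ℤ} (hq : 1 ≤ q)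
    (hv : (p • alphaV i + q • alphaV j) ∈ R a) :
    0 ≤ -p - c a i j * q ∧
      ((-p - c a i j * q) • alphaV i + q • alphaV j) ∈ R (ρ i a) := by
  have h := refl_mem_forward hCS hRS hv (i := i)
  rw [reflMap_pq c a hij (hCS.M1diag a i)] at h
  rcases sign_root hCS hRS h with hs | hs
  · have := hs i
    rw [pq_apply_i hij] at this
    exact ⟨this, h⟩
  · exfalso
    have := hs j
    rw [pq_apply_j hij] at this
    omega

end helpers

/-- characterizations of `m_{i,j}^a = 3`. -/
theorem stmt5 {I A : Type*} [DecidableEq I] [Fintype I] [Nonempty I] [Nonempty A]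
    (ρ : I → A → A) (c : A → I → I → ℤ) (R : A → Set (I → ℤ))
    (hCS : IsCartanScheme ρ c) (hRS : IsRootSystem ρ c R)
    (a : A) (i j : I) (hij : i ≠ j) :
    List.TFAE [c a i j = -1 ∧ c a j i = -1,
      coneIJ (R a) i j = {alphaV i, alphaV i + alphaV j, alphaV j},
      (coneIJ (R a) i j).ncard = 3] := by
  have hji : j ≠ i := Ne.symm hij
  -- basic coordinate facts
  have hai_i : alphaV i i = (1:ℤ) := by simp [alphaV]
  have haj_j : alphaV j j = (1:ℤ) := by simp [alphaV]
  have hai_j : alphaV i j = (0:ℤ) := by simp [alphaV, hji]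
  have haj_i : alphaV j i = (0:ℤ) := by simp [alphaV, hij]
  have hne_ij : alphaV i ≠ alphaV j := by
    intro h; have := congrFun h i; rw [hai_i, haj_i] at this; omega
  have hsum_ne_i : alphaV i + alphaV j ≠ alphaV i := by
    intro h; have := congrFun h j; simp [hai_j, haj_j] at this
  have hsum_ne_j : alphaV i + alphaV j ≠ alphaV j := by
    intro h; have := congrFun h i; simp [hai_i, haj_i] at this
  -- α_i + α_j as a p,q combination
  have hsum_eq : alphaV i + alphaV j = (1:ℤ) • alphaV i + (1:ℤ) • alphaV j := by simp
  tfae_have 1 → 2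
  | ⟨hcij, hcji⟩ => by
    ext v
    constructor
    · rintro ⟨hv, p, q, rfl⟩
      rcases nat_pq_root_cases hCS hRS hij hv with ⟨hp, hq⟩ | ⟨hp, hq⟩ | ⟨hp, hq⟩
      · subst hp; subst hq
        left; simp
      · subst hp; subst hq
        right; right; simp
      · -- p, q ≥ 1 : show p = q = 1
        have h1 := pos_root_refl hCS hRS hij (by exact_mod_cast hq) hv
        have hv' : ((q : ℤ) • alphaV j + (p : ℤ) • alphaV i) ∈ R a := by
          rwa [add_comm]
        have h2 := pos_root_refl hCS hRS hji (by exact_mod_cast hp) hv'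
        have e1 : -(p : ℤ) - c a i j * q = (q : ℤ) - p := by rw [hcij]; ring
        have e2 : -(q : ℤ) - c a j i * p = (p : ℤ) - q := by rw [hcji]; ring
        rw [e1] at h1
        rw [e2] at h2
        have hpq : (p : ℤ) = q := by omega
        have hroot : ((q : ℤ) - p) • alphaV i + (q : ℤ) • alphaV j ∈ R (ρ i a) := h1.2
        rw [hpq] at hroot
        have hz : ((q : ℤ) - q) • alphaV i + (q : ℤ) • alphaV j = (q : ℤ) • alphaV j := by
          simp
        rw [hz] at hroot
        rcases scalar_root hCS hRS hroot q rfl with h | h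
        · have hq1 : (q : ℤ) = 1 := by
            have := congrFun h j
            rw [Pi.smul_apply, haj_j, smul_eq_mul, mul_one] at this
            exact this
          right; left
          rw [hsum_eq, hpq, hq1]
        · exfalso
          have := congrFun h j
          rw [Pi.smul_apply, haj_j, smul_eq_mul, mul_one, Pi.neg_apply, haj_j] at this
          omega
    · intro hv
      rcases hv with h | h | h
      · subst h
        exact ⟨alpha_mem hCS hRS a i, 1, 0, by simp⟩
      · subst h
        refine ⟨?_, 1, 1, by rw [hsum_eq]; simp⟩
        have hm := refl_mem_back hCS hRS (alpha_mem hCS hRS (ρ i a) j) (i := i)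
        have heq : alphaV j = (0:ℤ) • alphaV i + (1:ℤ) • alphaV j := by simp
        rw [heq, reflMap_pq c a hij (hCS.M1diag a i)] at hm
        have : (-(0:ℤ) - c a i j * 1) • alphaV i + (1:ℤ) • alphaV j = alphaV i + alphaV j := by
          rw [hcij]; norm_num
        rwa [this] at hm
      · subst h
        exact ⟨alpha_mem hCS hRS a j, 0, 1, by simp⟩
  tfae_have 2 → 3
  | h => by
    rw [h]
    rw [Set.ncard_insert_of_notMem (by simp [hne_ij, Ne.symm hsum_ne_i]),
      Set.ncard_insert_of_notMem (by simp [hsum_ne_j]), Set.ncard_singleton]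
  tfae_have 3 → 1
  | h3 => by
    by_contra hcon
    -- the cone is finite
    have hfin : (coneIJ (R a) i j).Finite := by
      rcases (coneIJ (R a) i j).finite_or_infinite with hf | hf
      · exact hf
      · rw [hf.ncard] at h3; omega
    -- Case 1: c a i j = 0 (or c a j i = 0)
    have main0 : c a i j ≠ 0 := by
      intro hc0
      have hcone : coneIJ (R a) i j = {alphaV i, alphaV j} := by
        ext v
        constructor
        · rintro ⟨hv, p, q, rfl⟩
          rcases nat_pq_root_cases hCS hRS hij hv with ⟨hp, hq⟩ | ⟨hp, hq⟩ | ⟨hp, hq⟩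
          · subst hp; subst hq; left; simp
          · subst hp; subst hq; right; simp
          · exfalso
            have h1 := pos_root_refl hCS hRS hij (by exact_mod_cast hq) hv
            rw [hc0] at h1
            have := h1.1
            omega
        · intro hv
          rcases hv with h | h
          · subst h; exact ⟨alpha_mem hCS hRS a i, 1, 0, by simp⟩
          · subst h
            exact ⟨alpha_mem hCS hRS a j, 0, 1, by simp⟩
      rw [hcone, Set.ncard_pair hne_ij] at h3
      omega
    have main0' : c a j i ≠ 0 := fun hc0 => main0 (hCS.M2 a j i hc0)
    have hcij : c a i j ≤ -1 := by have := hCS.M1off a i j hij; omega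
    have hcji : c a j i ≤ -1 := by have := hCS.M1off a j i hji; omega
    -- the two extra roots
    set b3 : I → ℤ := (-c a i j) • alphaV i + (1:ℤ) • alphaV j with hb3
    set b4 : I → ℤ := (1:ℤ) • alphaV i + (-c a j i) • alphaV j with hb4
    have hb3mem : b3 ∈ R a := by
      have hm := refl_mem_back hCS hRS (alpha_mem hCS hRS (ρ i a) j) (i := i)
      have heq : alphaV j = (0:ℤ) • alphaV i + (1:ℤ) • alphaV j := by simp
      rw [heq, reflMap_pq c a hij (hCS.M1diag a i)] at hm
      have : (-(0:ℤ) - c a i j * 1) • alphaV i + (1:ℤ) • alphaV j = b3 := by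
        rw [hb3]; ring_nf
      rwa [this] at hm
    have hb4mem : b4 ∈ R a := by
      have hm := refl_mem_back hCS hRS (alpha_mem hCS hRS (ρ j a) i) (i := j)
      have heq : alphaV i = (0:ℤ) • alphaV j + (1:ℤ) • alphaV i := by simp
      rw [heq, reflMap_pq c a hji (hCS.M1diag a j)] at hm
      have : (-(0:ℤ) - c a j i * 1) • alphaV j + (1:ℤ) • alphaV i = b4 := by
        rw [hb4]; funext k; simp; ring
      rwa [this] at hm
    -- cone membership of the four roots
    have hb3cone : b3 ∈ coneIJ (R a) i j := by
      refine ⟨hb3mem, (-c a i j).toNat, 1, ?_⟩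
      rw [hb3, Int.toNat_of_nonneg (by omega)]
      norm_num
    have hb4cone : b4 ∈ coneIJ (R a) i j := by
      refine ⟨hb4mem, 1, (-c a j i).toNat, ?_⟩
      rw [hb4, Int.toNat_of_nonneg (by omega)]
      norm_num
    -- coordinates of b3, b4
    have hb3i : b3 i = -c a i j := by rw [hb3, pq_apply_i hij]
    have hb3j : b3 j = 1 := by rw [hb3, pq_apply_j hij]
    have hb4i : b4 i = 1 := by rw [hb4, pq_apply_i hij]
    have hb4j : b4 j = -c a j i := by rw [hb4, pq_apply_j hij]
    -- pairwise distinctness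
    have d13 : alphaV i ≠ b3 := by
      intro h; have := congrFun h j; rw [hai_j, hb3j] at this; omega
    have d14 : alphaV i ≠ b4 := by
      intro h; have := congrFun h j; rw [hai_j, hb4j] at this; omega
    have d23 : alphaV j ≠ b3 := by
      intro h; have := congrFun h i; rw [haj_i, hb3i] at this; omega
    have d24 : alphaV j ≠ b4 := by
      intro h; have := congrFun h i; rw [haj_i, hb4i] at this; omega
    have d34 : b3 ≠ b4 := by
      intro h
      have h1 := congrFun h i
      have h2 := congrFun h j
      rw [hb3i, hb4i] at h1
      rw [hb3j, hb4j] at h2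
      exact hcon ⟨by omega, by omega⟩
    have hsub : ({alphaV i, alphaV j, b3, b4} : Set (I → ℤ)) ⊆ coneIJ (R a) i j := by
      rintro v (h | h | h | h)
      · subst h; exact ⟨alpha_mem hCS hRS a i, 1, 0, by simp⟩
      · subst h; exact ⟨alpha_mem hCS hRS a j, 0, 1, by simp⟩
      · subst h; exact hb3cone
      · subst h; exact hb4cone
    have h4card : ({alphaV i, alphaV j, b3, b4} : Set (I → ℤ)).ncard = 4 := by
      rw [Set.ncard_insert_of_notMem (by simp [hne_ij, d13, d14]),
        Set.ncard_insert_of_notMem (by simp [d23, d24]),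
        Set.ncard_pair d34]
    have hle := Set.ncard_le_ncard hsub hfin
    rw [h4card, h3] at hle
    omega
  tfae_finish
end

section
/- For m, n ∈ ℕ, let G_{m,n} = ⟨s, t | s², t^m, (st⁻¹st)^n⟩ and H_{m,n} = ⟨s_1, …, s_m, T | s_i², T^m, (s_i s_{i+1})^n, T⁻¹s_iT s_{i+1} (indices mod m)⟩. Then the map s ↦ s_m, t ↦ T extends to a group isomorphism G_{m,n} ≅ H_{m,n}. -/
/-!
In `H_{m,n}` the relations `s_i² = 1` and `T⁻¹ s_i T s_{i+1} = 1` say that conjugation by `T`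
shifts the index, so every `s_i` is a conjugate `T^{-k} s_m T^k` of `s_m`, and `(s_i s_{i+1})ⁿ` is
conjugate to `(s_m T⁻¹ s_m T)ⁿ`. Hence `s ↦ s_m`, `t ↦ T` respects the relations of `G_{m,n}`.
Conversely, in `G_{m,n}` the elements `t^{-i} s t^i` and `t` satisfy the relations of `H_{m,n}`,
since `t^{-i} s t^i · t^{-(i+1)} s t^{i+1}` is conjugate to `s t⁻¹ s t` and `tᵐ = 1` makes the
exponent periodic. The two induced homomorphisms are inverse to each other on generators.
-/

/-- The relations of the group `G_{m,n} = ⟨s, t | s², tᵐ, (st⁻¹st)ⁿ⟩`. -/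
def relsGmn (m n : ℕ) : Set (FreeGroup (Fin 2)) :=
  letI s : FreeGroup (Fin 2) := FreeGroup.of 0
  letI t : FreeGroup (Fin 2) := FreeGroup.of 1
  {s ^ 2, t ^ m, (s * t⁻¹ * s * t) ^ n}

/-- The cyclic successor `i ↦ i + 1 (mod m)` on `Fin m`. -/
def cycSucc {m : ℕ} (hm : 0 < m) (i : Fin m) : Fin m :=
  ⟨(i.val + 1) % m, Nat.mod_lt _ hm⟩

/-- The relations of `H_{m,n} = ⟨s_1, …, s_m, T | s_i², Tᵐ, (s_i s_{i+1})ⁿ, T⁻¹s_iTs_{i+1}⟩`,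
with indices taken mod `m`. The generator `Sum.inl i` is `s_i` and `Sum.inr ()` is `T`. -/
def relsHmn (m n : ℕ) (hm : 0 < m) : Set (FreeGroup (Fin m ⊕ Unit)) :=
  letI s : Fin m → FreeGroup (Fin m ⊕ Unit) := fun i => FreeGroup.of (Sum.inl i)
  letI T : FreeGroup (Fin m ⊕ Unit) := FreeGroup.of (Sum.inr ())
  {r | (∃ i, r = s i ^ 2) ∨ r = T ^ m ∨ (∃ i, r = (s i * s (cycSucc hm i)) ^ n) ∨
    (∃ i, r = T⁻¹ * s i * T * s (cycSucc hm i))}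

lemma PresentedGroup.lift_of_eq_one {α : Type*} {rels : Set (FreeGroup α)} {r : FreeGroup α}
    (hr : r ∈ rels) : FreeGroup.lift (PresentedGroup.of (rels := rels)) r = 1 := by
  rw [show FreeGroup.lift PresentedGroup.of = PresentedGroup.mk rels from
    FreeGroup.ext_hom _ _ fun _ => rfl]
  exact PresentedGroup.one_of_mem hr

section

variable {G : Type*} [Group G] {m n : ℕ} (hm : 0 < m)

theorem lift_eq_one_of_mem_relsGmn_iff {f : Fin 2 → G} :
    (∀ r ∈ relsGmn m n, FreeGroup.lift f r = 1) ↔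
      f 0 ^ 2 = 1 ∧ f 1 ^ m = 1 ∧ (f 0 * (f 1)⁻¹ * f 0 * f 1) ^ n = 1 := by
  simp [relsGmn]

theorem lift_eq_one_of_mem_relsHmn_iff {f : Fin m ⊕ Unit → G} :
    (∀ r ∈ relsHmn m n hm, FreeGroup.lift f r = 1) ↔
      (∀ i, f (.inl i) ^ 2 = 1) ∧ f (.inr ()) ^ m = 1 ∧
      (∀ i, (f (.inl i) * f (.inl (cycSucc hm i))) ^ n = 1) ∧
      ∀ i, (f (.inr ()))⁻¹ * f (.inl i) * f (.inr ()) * f (.inl (cycSucc hm i)) = 1 := by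
  simp only [relsHmn, Set.mem_ofPred_eq]
  constructor
  · intro h
    exact ⟨fun i => by simpa using h _ (.inl ⟨i, rfl⟩), by simpa using h _ (.inr (.inl rfl)),
      fun i => by simpa using h _ (.inr (.inr (.inl ⟨i, rfl⟩))),
      fun i => by simpa using h _ (.inr (.inr (.inr ⟨i, rfl⟩)))⟩
  · rintro ⟨h₁, h₂, h₃, h₄⟩ r (⟨i, rfl⟩ | rfl | ⟨i, rfl⟩ | ⟨i, rfl⟩) <;> simp [h₁, h₂, h₃, h₄]

theorem inv_mul_mul_pow (a b : G) (k : ℕ) : (a⁻¹ * b * a) ^ k = a⁻¹ * b ^ k * a := by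
  simpa using (map_pow (MulAut.conj a⁻¹) b k).symm

theorem conj_pow_eq_of_conj_eq_cycSucc {s : Fin m → G} {T : G}
    (h : ∀ i, T⁻¹ * s i * T = s (cycSucc hm i)) (k : ℕ) (i : Fin m) :
    (T ^ k)⁻¹ * s i * T ^ k = s ⟨(i + k) % m, Nat.mod_lt _ hm⟩ := by
  induction k with
  | zero => simp [Nat.mod_eq_of_lt i.isLt]
  | succ k ih =>
    calc (T ^ (k + 1))⁻¹ * s i * T ^ (k + 1) = T⁻¹ * ((T ^ k)⁻¹ * s i * T ^ k) * T := by group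
      _ = s ⟨(i + (k + 1)) % m, Nat.mod_lt _ hm⟩ := by
        rw [ih, h]
        congr 1
        ext
        simp [cycSucc, Nat.add_assoc]

theorem conj_pow_succ_last_eq {s : Fin m → G} {T : G}
    (h : ∀ i, T⁻¹ * s i * T = s (cycSucc hm i)) (j : Fin m) :
    (T ^ (j.val + 1))⁻¹ * s ⟨m - 1, Nat.sub_lt hm one_pos⟩ * T ^ (j.val + 1) = s j := by
  rw [conj_pow_eq_of_conj_eq_cycSucc hm h]
  congr
  simp [show m - 1 + (j.val + 1) = j.val + m by omega, Nat.mod_eq_of_lt j.isLt]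

theorem conj_pow_succ_eq_cycSucc {σ τ : G} (hτ : τ ^ m = 1) (j : Fin m) :
    τ⁻¹ * ((τ ^ (j.val + 1))⁻¹ * σ * τ ^ (j.val + 1)) * τ =
      (τ ^ ((cycSucc hm j).val + 1))⁻¹ * σ * τ ^ ((cycSucc hm j).val + 1) := by
  have hmod : τ ^ ((cycSucc hm j).val + 1) = τ ^ (j.val + 2) := by
    rw [cycSucc, pow_succ, ← pow_eq_pow_mod _ hτ, ← pow_succ]
  rw [hmod]
  group

theorem conj_eq_cycSucc_of_relsHmn {s : Fin m → G} {T : G} (hs : ∀ i, s i ^ 2 = 1)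
    (hTs : ∀ i, T⁻¹ * s i * T * s (cycSucc hm i) = 1) (i : Fin m) :
    T⁻¹ * s i * T = s (cycSucc hm i) := by
  rw [eq_inv_of_mul_eq_one_left (hTs i), inv_eq_of_mul_eq_one_right (by rw [← sq, hs])]

theorem lift_eq_one_of_mem_relsGmn {s : Fin m → G} {T : G} (hs : ∀ i, s i ^ 2 = 1)
    (hT : T ^ m = 1) (hss : ∀ i, (s i * s (cycSucc hm i)) ^ n = 1)
    (hTs : ∀ i, T⁻¹ * s i * T * s (cycSucc hm i) = 1) :
    ∀ r ∈ relsGmn m n, FreeGroup.lift ![s ⟨m - 1, Nat.sub_lt hm one_pos⟩, T] r = 1 := by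
  set last : Fin m := ⟨m - 1, Nat.sub_lt hm one_pos⟩
  refine lift_eq_one_of_mem_relsGmn_iff.2 ⟨hs last, hT, ?_⟩
  calc (s last * T⁻¹ * s last * T) ^ n = (s last * (T⁻¹ * s last * T)) ^ n := by group
    _ = 1 := by rw [conj_eq_cycSucc_of_relsHmn hm hs hTs, hss]

-- `Fin m` is 0-indexed: `Sum.inl j` is `s_{j+1}`, sent to `t^{-(j+1)} s t^{j+1}`.
theorem lift_eq_one_of_mem_relsHmn {σ τ : G} (hσ : σ ^ 2 = 1) (hτ : τ ^ m = 1)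
    (hστ : (σ * τ⁻¹ * σ * τ) ^ n = 1) :
    ∀ r ∈ relsHmn m n hm, FreeGroup.lift
      (Sum.elim (fun j : Fin m => (τ ^ (j.val + 1))⁻¹ * σ * τ ^ (j.val + 1)) fun _ => τ) r = 1 := by
  refine (lift_eq_one_of_mem_relsHmn_iff hm).2 ⟨fun j => ?_, hτ, fun j => ?_, fun j => ?_⟩ <;>
    simp only [Sum.elim_inl, Sum.elim_inr]
  · rw [inv_mul_mul_pow, hσ]
    group
  · calc _ = ((τ ^ (j.val + 1))⁻¹ * (σ * τ⁻¹ * σ * τ) * τ ^ (j.val + 1)) ^ n := by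
          rw [← conj_pow_succ_eq_cycSucc hm hτ]
          congr 1
          group
      _ = 1 := by
        rw [inv_mul_mul_pow, hστ]
        group
  · rw [conj_pow_succ_eq_cycSucc hm hτ, ← sq, inv_mul_mul_pow, hσ]
    group

end

theorem stmt9_general (m n : ℕ) (hm : 0 < m) :
    ∃ φ : PresentedGroup (relsGmn m n) ≃* PresentedGroup (relsHmn m n hm),
      φ (PresentedGroup.of 0) = PresentedGroup.of (Sum.inl ⟨m - 1, Nat.sub_lt hm one_pos⟩) ∧
      φ (PresentedGroup.of 1) = PresentedGroup.of (Sum.inr ()) := by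
  obtain ⟨hσ, hτ, hστ⟩ := lift_eq_one_of_mem_relsGmn_iff.1 fun _ =>
    PresentedGroup.lift_of_eq_one (rels := relsGmn m n)
  obtain ⟨hs, hT, hss, hTs⟩ := (lift_eq_one_of_mem_relsHmn_iff hm).1 fun _ =>
    PresentedGroup.lift_of_eq_one (rels := relsHmn m n hm)
  let φ := PresentedGroup.toGroup (lift_eq_one_of_mem_relsGmn hm hs hT hss hTs)
  let ψ := PresentedGroup.toGroup (lift_eq_one_of_mem_relsHmn hm hσ hτ hστ)
  have hφσ : φ (.of 0) = .of (.inl ⟨m - 1, Nat.sub_lt hm one_pos⟩) := PresentedGroup.toGroup.of _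
  have hφτ : φ (.of 1) = .of (.inr ()) := PresentedGroup.toGroup.of _
  have hψs (j : Fin m) : ψ (.of (.inl j)) =
      (.of 1 ^ (j.val + 1))⁻¹ * .of 0 * .of 1 ^ (j.val + 1) := PresentedGroup.toGroup.of _
  have hψT : ψ (.of (.inr ())) = .of 1 := PresentedGroup.toGroup.of _
  have hψφ : ψ.comp φ = .id _ := PresentedGroup.ext <| Fin.forall_fin_two.2 ⟨by
      simp only [MonoidHom.comp_apply, MonoidHom.id_apply]
      rw [hφσ, hψs, Fin.val_mk, Nat.sub_add_cancel (Nat.one_le_of_lt hm), hτ]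
      group,
    (congrArg ψ hφτ).trans hψT⟩
  have hφψ : φ.comp ψ = .id _ := PresentedGroup.ext fun
    | .inl j => by
      simp only [MonoidHom.comp_apply, MonoidHom.id_apply]
      rw [hψs, map_mul, map_mul, map_inv, map_pow, hφσ, hφτ,
        conj_pow_succ_last_eq hm (conj_eq_cycSucc_of_relsHmn hm hs hTs)]
    | .inr () => (congrArg φ hψT).trans hφτ
  exact ⟨φ.toMulEquiv ψ hψφ hφψ, hφσ, hφτ⟩

/-- `s ↦ s_m`, `t ↦ T` extends to an isomorphism `G_{m,n} ≅ H_{m,n}`. -/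
theorem stmt9 (m n : ℕ) (hm : 0 < m) (hn : 0 < n) :
    ∃ φ : PresentedGroup (relsGmn m n) ≃* PresentedGroup (relsHmn m n hm),
      φ (PresentedGroup.of 0) = PresentedGroup.of (Sum.inl ⟨m - 1, Nat.sub_lt hm one_pos⟩) ∧
      φ (PresentedGroup.of 1) = PresentedGroup.of (Sum.inr ()) :=
  stmt9_general m n hm
end

section
/- For m, n ∈ ℕ with m ≥ 2, the group H_{m,n} = ⟨s_1, …, s_m, T | s_i², T^m, (s_i s_{i+1})^n, T⁻¹s_iT = s_{i+1} (indices mod m)⟩ is a semidirect product of the normal subgroup N = ⟨s_1, …, s_m⟩ and the cyclic group ℤ/mℤ generated by T; moreover N is isomorphic to the Coxeter group with presentation ⟨s_1, …, s_m | s_i², (s_i s_{i+1})^n⟩. -/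
/-- The relations of the Coxeter-type group `⟨s_1, …, s_m | s_i², (s_i s_{i+1})ⁿ⟩`. -/
def relsCox (m n : ℕ) (hm : 0 < m) : Set (FreeGroup (Fin m)) :=
  {r | (∃ i, r = FreeGroup.of i ^ 2) ∨
    ∃ i, r = (FreeGroup.of i * FreeGroup.of (cycSucc hm i)) ^ n}

/-!
Let `W` be the Coxeter group of the `m`-cycle with all edge labels `n`, and let `ℤ/m` act on `W`
by rotating the generators. Then `s_i ↦ s_i`, `T ↦ rotation by -1` respects the relations of
`H_{m,n}`, giving `H_{m,n} → W ⋊ ℤ/m`; precomposed with `W → H_{m,n}`, `s_i ↦ s_i`, it is the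
inclusion of `W`, so `W ≅ N`. The image of `T` in `ℤ/m` has order `m`, hence so does `T`, and
`⟨T⟩ ∩ N = 1` because `N` maps to `0`. `N` is normal because conjugation by `T` permutes the `s_i`.
-/

lemma cycSucc_eq_add_one {m : ℕ} [NeZero m] (i : Fin m) : cycSucc (NeZero.pos m) i = i + 1 := by
  ext
  simp [cycSucc, Fin.val_add]

lemma Fin.orderOf_ofAdd_neg_one (m : ℕ) [NeZero m] :
    orderOf (Multiplicative.ofAdd (-1 : Fin m)) = m := by
  rw [orderOf_ofAdd_eq_addOrderOf, addOrderOf_neg]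
  simpa using ((ZMod.finEquiv m).toAddEquiv.addOrderOf_eq 1).symm

theorem Subgroup.inf_zpowers_eq_bot_of_le_ker {G K : Type*} [Group G] [Group K] {N : Subgroup G}
    {f : G →* K} {g : G} (hN : N ≤ f.ker) (hg : orderOf (f g) = orderOf g) :
    N ⊓ zpowers g = ⊥ := by
  rw [eq_bot_iff]
  rintro _ ⟨hx, k, rfl⟩
  have hk : f (g ^ k) = 1 := hN hx
  rwa [map_zpow, ← orderOf_dvd_iff_zpow_eq_one, hg, orderOf_dvd_iff_zpow_eq_one] at hk

abbrev CycleCoxeter (m n : ℕ) [NeZero m] : Type := PresentedGroup (relsCox m n (NeZero.pos m))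

abbrev Hmn (m n : ℕ) [NeZero m] : Type := PresentedGroup (relsHmn m n (NeZero.pos m))

namespace CycleCoxeter

variable {m : ℕ} [NeZero m] {n : ℕ}

def gen (i : Fin m) : CycleCoxeter m n := PresentedGroup.of i

lemma gen_sq (i : Fin m) : gen (n := n) i ^ 2 = 1 :=
  PresentedGroup.one_of_mem (rels := relsCox m n _) (Or.inl ⟨i, rfl⟩)

lemma gen_mul_gen_add_one_pow (i : Fin m) : (gen (n := n) i * gen (i + 1)) ^ n = 1 := by
  rw [← cycSucc_eq_add_one]
  exact PresentedGroup.one_of_mem (rels := relsCox m n _) (Or.inr ⟨i, rfl⟩)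

variable {G : Type*} [Group G]

def lift (g : Fin m → G) (hsq : ∀ i, g i ^ 2 = 1) (hbr : ∀ i, (g i * g (i + 1)) ^ n = 1) :
    CycleCoxeter m n →* G :=
  PresentedGroup.toGroup (f := g) <| by
    rintro r (⟨i, rfl⟩ | ⟨i, rfl⟩)
    · simpa using hsq i
    · simpa [cycSucc_eq_add_one] using hbr i

@[simp]
lemma lift_gen (g : Fin m → G) (hsq : ∀ i, g i ^ 2 = 1) (hbr : ∀ i, (g i * g (i + 1)) ^ n = 1)
    (i : Fin m) : lift g hsq hbr (gen i) = g i :=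
  PresentedGroup.toGroup.of _

lemma hom_ext {φ ψ : CycleCoxeter m n →* G} (h : ∀ i, φ (gen i) = ψ (gen i)) : φ = ψ :=
  PresentedGroup.ext h

def rotateHom (c : Fin m) : CycleCoxeter m n →* CycleCoxeter m n :=
  lift (fun i => gen (i + c)) (fun _ => gen_sq _) fun i => by
    simpa only [add_right_comm i c 1] using gen_mul_gen_add_one_pow (i + c)

@[simp]
lemma rotateHom_gen (c i : Fin m) : rotateHom (n := n) c (gen i) = gen (i + c) :=
  lift_gen ..

lemma rotateHom_add (c d : Fin m) :
    rotateHom (n := n) (c + d) = (rotateHom c).comp (rotateHom d) :=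
  hom_ext fun i => by simp [add_assoc, add_comm c d]

lemma rotateHom_zero : rotateHom (n := n) (0 : Fin m) = MonoidHom.id _ :=
  hom_ext fun i => by simp

variable (m n) in
def rotate : Multiplicative (Fin m) →* MulAut (CycleCoxeter m n) where
  toFun c := (rotateHom c.toAdd).toMulEquiv (rotateHom (-c.toAdd))
    (by rw [← rotateHom_add, neg_add_cancel, rotateHom_zero])
    (by rw [← rotateHom_add, add_neg_cancel, rotateHom_zero])
  map_one' := MulEquiv.ext fun x => DFunLike.congr_fun rotateHom_zero x
  map_mul' c d := MulEquiv.ext fun x => DFunLike.congr_fun (rotateHom_add _ _) x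

@[simp]
lemma rotate_gen (c : Multiplicative (Fin m)) (i : Fin m) :
    rotate m n c (gen i) = gen (i + c.toAdd) :=
  rotateHom_gen ..

end CycleCoxeter

namespace Hmn

variable {m : ℕ} [NeZero m] {n : ℕ}

def s (i : Fin m) : Hmn m n := PresentedGroup.of (Sum.inl i)

variable (m n) in
def T : Hmn m n := PresentedGroup.of (Sum.inr ())

lemma s_sq (i : Fin m) : s (n := n) i ^ 2 = 1 :=
  PresentedGroup.one_of_mem (rels := relsHmn m n _) (Or.inl ⟨i, rfl⟩)

lemma T_pow : T m n ^ m = 1 :=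
  PresentedGroup.one_of_mem (rels := relsHmn m n _) (Or.inr (Or.inl rfl))

lemma s_mul_s_add_one_pow (i : Fin m) : (s (n := n) i * s (i + 1)) ^ n = 1 := by
  rw [← cycSucc_eq_add_one]
  exact PresentedGroup.one_of_mem (rels := relsHmn m n _) (Or.inr (Or.inr (Or.inl ⟨i, rfl⟩)))

lemma s_inv (i : Fin m) : (s (n := n) i)⁻¹ = s i :=
  inv_eq_of_mul_eq_one_right (by rw [← sq, s_sq])

lemma T_inv_mul_s_mul_T (i : Fin m) : (T m n)⁻¹ * s i * T m n = s (i + 1) := by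
  have h : (T m n)⁻¹ * s i * T m n * s (i + 1) = 1 := by
    rw [← cycSucc_eq_add_one]
    exact PresentedGroup.one_of_mem (rels := relsHmn m n _) (Or.inr (Or.inr (Or.inr ⟨i, rfl⟩)))
  rwa [mul_eq_one_iff_eq_inv, s_inv] at h

open CycleCoxeter SemidirectProduct

variable {G : Type*} [Group G]

def lift (g : Fin m → G) (t : G) (hsq : ∀ i, g i ^ 2 = 1) (ht : t ^ m = 1)
    (hbr : ∀ i, (g i * g (i + 1)) ^ n = 1) (hconj : ∀ i, t⁻¹ * g i * t = g (i + 1)) :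
    Hmn m n →* G :=
  PresentedGroup.toGroup (f := Sum.elim g fun _ => t) <| by
    rintro r (⟨i, rfl⟩ | rfl | ⟨i, rfl⟩ | ⟨i, rfl⟩)
    · simpa using hsq i
    · simpa using ht
    · simpa [cycSucc_eq_add_one] using hbr i
    · simp [cycSucc_eq_add_one, hconj, ← sq, hsq]

section lift

variable (g : Fin m → G) (t : G) (hsq : ∀ i, g i ^ 2 = 1) (ht : t ^ m = 1)
    (hbr : ∀ i, (g i * g (i + 1)) ^ n = 1) (hconj : ∀ i, t⁻¹ * g i * t = g (i + 1))

@[simp]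
lemma lift_s (i : Fin m) : lift g t hsq ht hbr hconj (s i) = g i :=
  PresentedGroup.toGroup.of _

@[simp]
lemma lift_T : lift g t hsq ht hbr hconj (T m n) = t :=
  PresentedGroup.toGroup.of _

end lift

variable (m n) in
abbrev SemidirectModel : Type :=
  CycleCoxeter m n ⋊[CycleCoxeter.rotate m n] Multiplicative (Fin m)

variable (m n) in
def toSemidirect : Hmn m n →* SemidirectModel m n :=
  lift (fun i => inl (gen i)) (inr (Multiplicative.ofAdd (-1)))
    (fun i => by rw [← map_pow, gen_sq, map_one])
    (by rw [← map_pow, orderOf_dvd_iff_pow_eq_one.mp (Fin.orderOf_ofAdd_neg_one m).dvd, map_one])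
    (fun i => by rw [← map_mul, ← map_pow, gen_mul_gen_add_one_pow, map_one])
    (fun i => by simp [← map_inv, ← inl_aut])

@[simp]
lemma toSemidirect_s (i : Fin m) : toSemidirect m n (s i) = inl (gen i) :=
  lift_s ..

@[simp]
lemma toSemidirect_T : toSemidirect m n (T m n) = inr (Multiplicative.ofAdd (-1)) :=
  lift_T ..

variable (m n) in
def N : Subgroup (Hmn m n) := Subgroup.closure (Set.range s)

variable (m n) in
def ofCoxeter : CycleCoxeter m n →* Hmn m n := CycleCoxeter.lift s s_sq s_mul_s_add_one_pow

lemma toSemidirect_comp_ofCoxeter : (toSemidirect m n).comp (ofCoxeter m n) = inl :=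
  CycleCoxeter.hom_ext fun i => by simp [ofCoxeter]

lemma ofCoxeter_injective : Function.Injective (ofCoxeter m n) := by
  have h : Function.Injective (toSemidirect m n ∘ ofCoxeter m n) := by
    rw [← MonoidHom.coe_comp, toSemidirect_comp_ofCoxeter]
    exact inl_injective
  exact h.of_comp

lemma range_ofCoxeter : (ofCoxeter m n).range = N m n := by
  rw [MonoidHom.range_eq_map, ← PresentedGroup.closure_range_of, MonoidHom.map_closure,
    ← Set.range_comp]
  congr 2

variable (m n) in
noncomputable def coxeterEquivN : CycleCoxeter m n ≃* N m n :=
  (MonoidHom.ofInjective ofCoxeter_injective).trans (MulEquiv.subgroupCongr range_ofCoxeter)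

lemma N_normal : (N m n).Normal := by
  rw [← Subgroup.normalizer_eq_top_iff, eq_top_iff, ← PresentedGroup.closure_range_of,
    Subgroup.closure_le]
  rintro _ ⟨i | ⟨⟩, rfl⟩
  · exact Subgroup.le_normalizer (Subgroup.subset_closure ⟨i, rfl⟩)
  · have hT : (T m n)⁻¹ ∈ Subgroup.normalizer (Set.range (s (n := n))) :=
      Subgroup.mem_normalizer_fintype <| by
        rintro _ ⟨i, rfl⟩
        exact ⟨i + 1, by rw [inv_inv, T_inv_mul_s_mul_T]⟩
    exact Subgroup.normalizer_le_normalizer_closure _ (inv_mem_iff.mp hT)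

lemma N_sup_zpowers_T : N m n ⊔ Subgroup.zpowers (T m n) = ⊤ := by
  rw [eq_top_iff, ← PresentedGroup.closure_range_of, Subgroup.closure_le]
  rintro _ ⟨i | ⟨⟩, rfl⟩
  · exact Subgroup.mem_sup_left (Subgroup.subset_closure ⟨i, rfl⟩)
  · exact Subgroup.mem_sup_right (Subgroup.mem_zpowers _)

lemma orderOf_toSemidirect_T : orderOf (rightHom (toSemidirect m n (T m n))) = m := by
  rw [toSemidirect_T, rightHom_inr, Fin.orderOf_ofAdd_neg_one]

lemma orderOf_T : orderOf (T m n) = m := by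
  refine Nat.dvd_antisymm (orderOf_dvd_of_pow_eq_one T_pow) ?_
  simpa only [MonoidHom.comp_apply, orderOf_toSemidirect_T] using
    orderOf_map_dvd (rightHom.comp (toSemidirect m n)) (T m n)

lemma N_inf_zpowers_T : N m n ⊓ Subgroup.zpowers (T m n) = ⊥ := by
  refine Subgroup.inf_zpowers_eq_bot_of_le_ker (f := rightHom.comp (toSemidirect m n)) ?_
    (orderOf_toSemidirect_T.trans orderOf_T.symm)
  refine (Subgroup.closure_le _).mpr ?_
  rintro _ ⟨i, rfl⟩
  simp

variable (m n) in
noncomputable def zpowersTEquiv : Subgroup.zpowers (T m n) ≃* Multiplicative (ZMod m) :=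
  mulEquivOfCyclicCardEq (by rw [Nat.card_zpowers, orderOf_T]; simp)

end Hmn

theorem stmt10_general (m n : ℕ) :
    ∀ hm : 0 < m,
    letI H := PresentedGroup (relsHmn m n hm)
    letI N : Subgroup H := Subgroup.closure (Set.range fun i : Fin m =>
      PresentedGroup.of (Sum.inl i))
    letI T : H := PresentedGroup.of (Sum.inr ())
    N.Normal ∧ N ⊓ Subgroup.zpowers T = ⊥ ∧ N ⊔ Subgroup.zpowers T = ⊤ ∧
      Nonempty ((Subgroup.zpowers T) ≃* Multiplicative (ZMod m)) ∧
      Nonempty (N ≃* PresentedGroup (relsCox m n hm)) := by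
  intro hm
  have : NeZero m := ⟨hm.ne'⟩
  exact ⟨Hmn.N_normal (m := m) (n := n), Hmn.N_inf_zpowers_T, Hmn.N_sup_zpowers_T,
    ⟨Hmn.zpowersTEquiv m n⟩, ⟨(Hmn.coxeterEquivN m n).symm⟩⟩

/-- for `m ≥ 2`, `H_{m,n}` is the semidirect product of the normal subgroup
`N = ⟨s_1, …, s_m⟩` and the cyclic group `ℤ/mℤ` generated by `T`; moreover `N` is the
Coxeter group `⟨s_1, …, s_m | s_i², (s_i s_{i+1})ⁿ⟩`. -/
theorem stmt10 (m n : ℕ) (hm2 : 2 ≤ m) (hn : 0 < n) :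
    ∀ hm : 0 < m,
    letI H := PresentedGroup (relsHmn m n hm)
    letI N : Subgroup H := Subgroup.closure (Set.range fun i : Fin m =>
      PresentedGroup.of (Sum.inl i))
    letI T : H := PresentedGroup.of (Sum.inr ())
    N.Normal ∧ N ⊓ Subgroup.zpowers T = ⊥ ∧ N ⊔ Subgroup.zpowers T = ⊤ ∧
      Nonempty ((Subgroup.zpowers T) ≃* Multiplicative (ZMod m)) ∧
      Nonempty (N ≃* PresentedGroup (relsCox m n hm)) :=
  stmt10_general m n
end
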